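/- Let A be a unital C*-algebra, H a complex Hilbert space, P ∈ B(H) positive, and Φ : A → B(H) a pure CP map with Φ(1) = P. Then Φ is both a P-C*-extreme point and a linear extreme point of CP^{(P)}(A,B(H)). -/

import Mathlib

open scoped ComplexOrder

noncomputable section

section Defs

variable {A H : Type*}
variable [NormedAddCommGroup H] [InnerProductSpace ℂ H]

/-- An operator on a complex inner product space is positive:
`0 ≤ ⟪x, T x⟫` for all `x`. -/
def IsPosOp (T : H →L[ℂ] H) : Prop := ∀ x : H, 0 ≤ (inner ℂ x (T x) : ℂ)

variable [Ring A] [StarRing A] [Algebra ℂ A]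

/-- Complete positivity of a linear map `Φ : A → B(H)`:
`∑_{i,j} ⟪h i, Φ(a i* a j) (h j)⟫ ≥ 0` for all finite families. -/
def IsCPMap (Φ : A →ₗ[ℂ] (H →L[ℂ] H)) : Prop :=
  ∀ (n : ℕ) (a : Fin n → A) (h : Fin n → H),
    0 ≤ ∑ i, ∑ j, (inner ℂ (h i) ((Φ (star (a i) * a j)) (h j)) : ℂ)

/-- `CP^{(P)}(A, B(H))`: the CP maps `Φ` with `Φ 1 = P`. -/
def CPP (P : H →L[ℂ] H) : Set (A →ₗ[ℂ] (H →L[ℂ] H)) := {Φ | IsCPMap Φ ∧ Φ 1 = P}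

/-- `CCP(A, B(H))`: the contractive CP maps, i.e. CP maps with `Φ 1 ≤ 1`. -/
def CCPmaps : Set (A →ₗ[ℂ] (H →L[ℂ] H)) := {Φ | IsCPMap Φ ∧ IsPosOp (1 - Φ 1)}

variable [CompleteSpace H]

/-- `Ad_T : X ↦ T* X T`, as a linear map on `B(H)`. -/
def conjAd (T : H →L[ℂ] H) : (H →L[ℂ] H) →ₗ[ℂ] (H →L[ℂ] H) where
  toFun X := star T * X * T
  map_add' X Y := by simp [add_mul, mul_add]
  map_smul' c X := by simp [mul_smul_comm, smul_mul_assoc]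

/-- `Φ ∈ CP^{(P)}` is a `P`-`C*`-extreme point of `CP^{(P)}(A, B(H))`:
whenever `Φ = ∑ Ad_{T j} ∘ Φs j` is a proper `P`-`C*`-convex combination of members of
`CP^{(P)}`, each `Φs j` equals `Ad_{S j} ∘ Φ` for some invertible `S j`. -/
def IsPCExtreme (P : H →L[ℂ] H) (Φ : A →ₗ[ℂ] (H →L[ℂ] H)) : Prop :=
  Φ ∈ CPP (A := A) P ∧
  ∀ (n : ℕ) (T : Fin n → (H →L[ℂ] H)) (Φs : Fin n → (A →ₗ[ℂ] (H →L[ℂ] H))),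
    (∀ j, IsUnit (T j)) → (∀ j, Φs j ∈ CPP (A := A) P) →
    (∑ j, star (T j) * P * T j) = P →
    Φ = ∑ j, (conjAd (T j)).comp (Φs j) →
    ∀ j, ∃ S : H →L[ℂ] H, IsUnit S ∧ Φs j = (conjAd S).comp Φ

/-- `Φ ∈ C` is a `C*`-extreme point of the `C*`-convex set `C`:
whenever `Φ = ∑ Ad_{T j} ∘ Φs j` is a proper `C*`-convex combination of members of `C`,
each `Φs j` is unitarily equivalent to `Φ`. -/
def IsCstarExtreme (C : Set (A →ₗ[ℂ] (H →L[ℂ] H))) (Φ : A →ₗ[ℂ] (H →L[ℂ] H)) : Prop :=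
  Φ ∈ C ∧
  ∀ (n : ℕ) (T : Fin n → (H →L[ℂ] H)) (Φs : Fin n → (A →ₗ[ℂ] (H →L[ℂ] H))),
    (∀ j, IsUnit (T j)) → (∀ j, Φs j ∈ C) →
    (∑ j, star (T j) * T j) = 1 →
    Φ = ∑ j, (conjAd (T j)).comp (Φs j) →
    ∀ j, ∃ U : H →L[ℂ] H, U ∈ unitary (H →L[ℂ] H) ∧ Φs j = (conjAd U).comp Φ

/-- `Φ ∈ C` is a linear extreme point of the convex set `C`. -/
def IsLinExtreme (C : Set (A →ₗ[ℂ] (H →L[ℂ] H))) (Φ : A →ₗ[ℂ] (H →L[ℂ] H)) : Prop :=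
  Φ ∈ C ∧
  ∀ (n : ℕ) (t : Fin n → ℝ) (Φs : Fin n → (A →ₗ[ℂ] (H →L[ℂ] H))),
    (∀ j, 0 < t j ∧ t j < 1) → (∀ j, Φs j ∈ C) → (∑ j, t j) = 1 →
    Φ = ∑ j, (t j : ℂ) • Φs j →
    ∀ j, Φs j = Φ

end Defs

/-! A pure CP map `Φ` absorbs every decomposition into CP summands: if `Φ = ∑ Ψ i` with each `Ψ i`
CP, then `Φ - Ψ j` is CP as well, so purity forces `Ψ j = t • Φ`. For a `P`-`C*`-convex combination
`Ψ j = Ad_{T j} ∘ Φs j` this gives `Φs j = Ad_{√t • (T j)⁻¹} ∘ Φ`; for a convex combination it gives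
`t j • Φs j = t • Φ`, and evaluating at `1` shows `t = t j`. The degenerate case `P = 0` is covered by
the fact that a CP map vanishing at `1` vanishes identically. -/

namespace Complex

open ComplexConjugate

lemma eq_zero_of_forall_ofReal_mul_add_nonneg {u K : ℂ} (h : ∀ s : ℝ, 0 ≤ s * u + K) : u = 0 := by
  have hre : ∀ s : ℝ, 0 ≤ s * u.re + K.re := fun s => by simpa using (nonneg_iff.mp (h s)).1
  have him : ∀ s : ℝ, s * u.im + K.im = 0 := fun s => by simpa using (nonneg_iff.mp (h s)).2.symm
  have hu_im : u.im = 0 := by linarith [him 0, him 1]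
  have hu_re : u.re = 0 := by
    by_contra hne
    have := hre (-(K.re + 1) / u.re)
    rw [div_mul_cancel₀ _ hne] at this
    linarith
  exact Complex.ext hu_re hu_im

lemma eq_zero_of_forall_conj_mul_add_mul_add_nonneg {z w K : ℂ}
    (h : ∀ c : ℂ, 0 ≤ conj c * z + c * w + K) : z = 0 := by
  have hsum : z + w = 0 := eq_zero_of_forall_ofReal_mul_add_nonneg fun s => by
    simpa [mul_add] using h s
  have hdiff : I * (w - z) = 0 := eq_zero_of_forall_ofReal_mul_add_nonneg fun s => by
    convert h (s * I) using 2
    simp only [map_mul, conj_ofReal, conj_I]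
    ring
  have hwz : w = z := by simpa [I_ne_zero, sub_eq_zero] using hdiff
  simpa [hwz, ← two_mul] using hsum

end Complex

section CompletelyPositive

variable {A H : Type*} [NormedAddCommGroup H] [InnerProductSpace ℂ H]
  [Ring A] [StarRing A] [Algebra ℂ A]

def IsPureCP (Φ : A →ₗ[ℂ] (H →L[ℂ] H)) : Prop :=
  ∀ Ψ : A →ₗ[ℂ] (H →L[ℂ] H), IsCPMap Ψ → IsCPMap (Φ - Ψ) →
    ∃ t : ℝ, 0 ≤ t ∧ t ≤ 1 ∧ Ψ = (t : ℂ) • Φ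

namespace IsCPMap

lemma zero : IsCPMap (0 : A →ₗ[ℂ] (H →L[ℂ] H)) := by
  intro n a h
  simp

lemma add {Φ Ψ : A →ₗ[ℂ] (H →L[ℂ] H)} (hΦ : IsCPMap Φ) (hΨ : IsCPMap Ψ) : IsCPMap (Φ + Ψ) := by
  intro n a h
  simpa [inner_add_right, Finset.sum_add_distrib] using add_nonneg (hΦ n a h) (hΨ n a h)

lemma sum {ι : Type*} (s : Finset ι) {Φ : ι → A →ₗ[ℂ] (H →L[ℂ] H)} (hΦ : ∀ i ∈ s, IsCPMap (Φ i)) :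
    IsCPMap (∑ i ∈ s, Φ i) :=
  Finset.sum_induction Φ IsCPMap (fun _ _ => add) zero hΦ

lemma ofReal_smul {Φ : A →ₗ[ℂ] (H →L[ℂ] H)} (hΦ : IsCPMap Φ) {t : ℝ} (ht : 0 ≤ t) :
    IsCPMap ((t : ℂ) • Φ) := by
  intro n a h
  simpa [inner_smul_right, ← Finset.mul_sum] using
    mul_nonneg (Complex.zero_le_real.mpr ht) (hΦ n a h)

lemma conjAd_comp [CompleteSpace H] (T : H →L[ℂ] H) {Φ : A →ₗ[ℂ] (H →L[ℂ] H)} (hΦ : IsCPMap Φ) :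
    IsCPMap ((conjAd T).comp Φ) := by
  intro n a h
  simpa [conjAd, ContinuousLinearMap.star_eq_adjoint, ContinuousLinearMap.adjoint_inner_right]
    using hΦ n a (fun i => T (h i))

/-- The `2 × 2` block `[Ψ 1, Ψ a; Ψ a*, Ψ (a* a)]` is positive with vanishing corner `Ψ 1`,
which kills its off-diagonal entries. -/
lemma eq_zero_of_map_one_eq_zero {Ψ : A →ₗ[ℂ] (H →L[ℂ] H)} (hΨ : IsCPMap Ψ) (h1 : Ψ 1 = 0) :
    Ψ = 0 := by
  have hinner : ∀ (a : A) (x y : H), inner ℂ x (Ψ a y) = 0 := fun a x y =>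
    Complex.eq_zero_of_forall_conj_mul_add_mul_add_nonneg
      (w := inner ℂ y (Ψ (star a) x)) (K := inner ℂ y (Ψ (star a * a) y)) fun c => by
        convert hΨ 2 ![1, a] ![c • x, y] using 1
        simp only [Fin.sum_univ_two, Matrix.cons_val_zero, Matrix.cons_val_one,
          Matrix.cons_val_fin_one, star_one, mul_one, one_mul, h1, map_smul, inner_smul_left,
          inner_smul_right, zero_apply, inner_zero_right, mul_zero, zero_add]
        ring
  ext a y
  simpa using hinner a (Ψ a y) y

end IsCPMap

lemma IsPureCP.exists_eq_smul_of_eq_sum {Φ : A →ₗ[ℂ] (H →L[ℂ] H)} (hΦ : IsPureCP Φ)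
    {ι : Type*} [Fintype ι] [DecidableEq ι] {Ψ : ι → A →ₗ[ℂ] (H →L[ℂ] H)}
    (hΨ : ∀ i, IsCPMap (Ψ i)) (hsum : Φ = ∑ i, Ψ i) (j : ι) :
    ∃ t : ℝ, 0 ≤ t ∧ Ψ j = (t : ℂ) • Φ := by
  have hrest : IsCPMap (Φ - Ψ j) := by
    rw [hsum, ← Finset.sum_erase_eq_sub (Finset.mem_univ j)]
    exact IsCPMap.sum _ fun i _ => hΨ i
  obtain ⟨t, ht0, -, ht⟩ := hΦ (Ψ j) (hΨ j) hrest
  exact ⟨t, ht0, ht⟩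

theorem IsPureCP.isLinExtreme_CPP {P : H →L[ℂ] H} {Φ : A →ₗ[ℂ] (H →L[ℂ] H)} (hΦ : IsPureCP Φ)
    (hΦcp : IsCPMap Φ) (hΦ1 : Φ 1 = P) : IsLinExtreme (CPP (A := A) P) Φ := by
  refine ⟨⟨hΦcp, hΦ1⟩, fun n t Φs ht hΦs _ hsum j => ?_⟩
  obtain ⟨c, -, hc⟩ :=
    hΦ.exists_eq_smul_of_eq_sum (fun i => (hΦs i).1.ofReal_smul (ht i).1.le) hsum j
  by_cases hP : P = 0
  · rw [(hΦs j).1.eq_zero_of_map_one_eq_zero ((hΦs j).2.trans hP),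
      hΦcp.eq_zero_of_map_one_eq_zero (hΦ1.trans hP)]
  have hct : (c : ℂ) = t j := by
    have hc1 := LinearMap.congr_fun hc 1
    rw [LinearMap.smul_apply, LinearMap.smul_apply, (hΦs j).2, hΦ1] at hc1
    exact (smul_left_injective ℂ hP hc1).symm
  have htj : (t j : ℂ) ≠ 0 := by exact_mod_cast (ht j).1.ne'
  rw [hct] at hc
  exact smul_right_injective _ htj hc

end CompletelyPositive

section Conjugation

variable {H : Type*} [NormedAddCommGroup H] [InnerProductSpace ℂ H] [CompleteSpace H]

lemma conjAd_one : conjAd (1 : H →L[ℂ] H) = LinearMap.id := by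
  ext X : 1
  simp [conjAd]

lemma conjAd_mul (S T : H →L[ℂ] H) : conjAd (S * T) = (conjAd T).comp (conjAd S) := by
  ext X : 1
  simp [conjAd, star_mul, mul_assoc]

lemma conjAd_ofReal_smul (r : ℝ) (T : H →L[ℂ] H) :
    conjAd ((r : ℂ) • T) = ((r ^ 2 : ℝ) : ℂ) • conjAd T := by
  ext X : 1
  simp only [conjAd, LinearMap.coe_mk, AddHom.coe_mk, LinearMap.smul_apply, star_smul,
    Complex.star_def, Complex.conj_ofReal, smul_mul_assoc, mul_smul_comm, smul_smul, sq,
    Complex.ofReal_mul]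

lemma conjAd_inv_comp_conjAd_comp {M : Type*} [AddCommMonoid M] [Module ℂ M]
    (u : (H →L[ℂ] H)ˣ) (Ψ : M →ₗ[ℂ] (H →L[ℂ] H)) :
    (conjAd ↑u⁻¹).comp ((conjAd ↑u).comp Ψ) = Ψ := by
  rw [← LinearMap.comp_assoc, ← conjAd_mul, Units.mul_inv, conjAd_one, LinearMap.id_comp]

variable {A : Type*} [Ring A] [StarRing A] [Algebra ℂ A]

theorem IsPureCP.isPCExtreme {P : H →L[ℂ] H} {Φ : A →ₗ[ℂ] (H →L[ℂ] H)} (hΦ : IsPureCP Φ)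
    (hΦcp : IsCPMap Φ) (hΦ1 : Φ 1 = P) : IsPCExtreme P Φ := by
  refine ⟨⟨hΦcp, hΦ1⟩, fun n T Φs hT hΦs _ hsum j => ?_⟩
  obtain ⟨t, ht0, ht⟩ :=
    hΦ.exists_eq_smul_of_eq_sum (fun i => (hΦs i).1.conjAd_comp (T i)) hsum j
  obtain ⟨u, hu⟩ := hT j
  have hΦs_eq : Φs j = (t : ℂ) • (conjAd ↑u⁻¹).comp Φ := by
    rw [← conjAd_inv_comp_conjAd_comp u (Φs j), hu, ht, LinearMap.comp_smul]
  rcases ht0.eq_or_lt with rfl | htpos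
  · have hΦ0 : Φ = 0 := by
      refine hΦcp.eq_zero_of_map_one_eq_zero ?_
      rw [hΦ1, ← (hΦs j).2, hΦs_eq]
      simp
    exact ⟨1, isUnit_one, by simp [hΦs_eq, hΦ0]⟩
  · have hsqrt : (√t : ℂ) ≠ 0 := by exact_mod_cast (Real.sqrt_pos.mpr htpos).ne'
    refine ⟨(√t : ℂ) • ↑u⁻¹, (Units.mk0 _ hsqrt • u⁻¹).isUnit, ?_⟩
    rw [hΦs_eq, conjAd_ofReal_smul, Real.sq_sqrt ht0, LinearMap.smul_comp]

end Conjugation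

theorem stmt5_general {A : Type*} [NormedRing A] [StarRing A] [NormedAlgebra ℂ A]
    {H : Type*} [NormedAddCommGroup H] [InnerProductSpace ℂ H] [CompleteSpace H]
    (P : H →L[ℂ] H)
    (Φ : A →ₗ[ℂ] (H →L[ℂ] H)) (hΦcp : IsCPMap Φ) (hΦ1 : Φ 1 = P)
    (hΦpure : ∀ Ψ : A →ₗ[ℂ] (H →L[ℂ] H), IsCPMap Ψ → IsCPMap (Φ - Ψ) →
      ∃ t : ℝ, 0 ≤ t ∧ t ≤ 1 ∧ Ψ = (t : ℂ) • Φ) :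
    IsPCExtreme P Φ ∧ IsLinExtreme (CPP (A := A) P) Φ :=
  ⟨IsPureCP.isPCExtreme hΦpure hΦcp hΦ1, IsPureCP.isLinExtreme_CPP hΦpure hΦcp hΦ1⟩

/-- Proposition `prop-PC-ext-non-empty` (ii). If `Φ : A → B(H)` is a pure CP
map with `Φ(1) = P`, then `Φ` is both a `P`-`C*`-extreme point and a linear extreme point of
`CP^{(P)}(A, B(H))`. -/
theorem stmt5 {A : Type*} [NormedRing A] [StarRing A] [CStarRing A] [NormedAlgebra ℂ A] [StarModule ℂ A] [CompleteSpace A]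
    {H : Type*} [NormedAddCommGroup H] [InnerProductSpace ℂ H] [CompleteSpace H]
    (P : H →L[ℂ] H) (hP : IsPosOp P)
    (Φ : A →ₗ[ℂ] (H →L[ℂ] H)) (hΦcp : IsCPMap Φ) (hΦ1 : Φ 1 = P)
    (hΦpure : ∀ Ψ : A →ₗ[ℂ] (H →L[ℂ] H), IsCPMap Ψ → IsCPMap (Φ - Ψ) →
      ∃ t : ℝ, 0 ≤ t ∧ t ≤ 1 ∧ Ψ = (t : ℂ) • Φ) :
    IsPCExtreme P Φ ∧ IsLinExtreme (CPP (A := A) P) Φ :=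
  stmt5_general P Φ hΦcp hΦ1 hΦpure
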